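/- arXiv:2206.09882 — 3 statements merged into one kernel-verified Lean document; each statement's English description precedes it below -/
import Mathlib

section
/- Let α ∈ [−1,1] and let u ∈ W^{1,2}((−1,1)³; ℝ³) satisfy e₁₁(u) = e₂₂(u) = e₃₃(u) = e₁₂(u) = e₁₃(u) = 0 and |e₂₃(u)| ≤ 1 almost everywhere, together with the boundary condition u₃(x₁, x₂, ±1) = α x₁ x₂. Then there exist constants c, d ∈ ℝ and a Lipschitz function ψ : (−1,1) → ℝ with Lipschitz constant at most 2(1 − |α|) such that u(x) = (−α x₂x₃ + d x₂ + c, α x₁x₃ − d x₁ + ψ(x₃), α x₁x₂). -/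
/-!
Subtracting the twist `w = α (-x₂x₃, x₁x₃, x₁x₂)`, whose only nonzero strain is `e₂₃(w) = α x₁`,
leaves a field `v = u - w` with `e(v) = 0` except for `|e₂₃(v) + α x₁| ≤ 1`, and with `v₃ = 0` on
the face `x₃ = 1` (in the code coordinates are indexed from `0`). If `∂ᵢvₖ = 0` a.e., then by
Fubini and the fundamental theorem of calculus `vₖ` is constant on almost every line in direction
`i`, hence on every such line by continuity. This gives in turn `v₃ = 0`, `v₁ = F(x₂)` and
`v₂ = G(x₁, x₃)`. Then `e₁₂(v) = 0` reads `F'(x₂) = -∂₁G(x₁, x₃)` a.e., so both sides are a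
constant `d`. Finally, for `ψ = G(0, ·)` the bound on `e₂₃` reads `|ψ'(x₃) + 2αx₁| ≤ 2` for a.e.
`x₁ ∈ (-1, 1)`, which forces `|ψ'| ≤ 2(1 - |α|)`.
-/

open MeasureTheory Set

/-- The open cube `(-1,1)³`. -/
def cube : Set (Fin 3 → ℝ) := {x | ∀ i, x i ∈ Ioo (-1 : ℝ) 1}

/-- The closed cube `[-1,1]³`. -/
def cubeCl : Set (Fin 3 → ℝ) := {x | ∀ i, x i ∈ Icc (-1 : ℝ) 1}

/-- Linearized strain `e_{ij}(u) = (∂_j u_i + ∂_i u_j)/2`. -/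
noncomputable def strain (u : (Fin 3 → ℝ) → (Fin 3 → ℝ)) (i j : Fin 3)
    (x : Fin 3 → ℝ) : ℝ :=
  (fderiv ℝ u x (Pi.single j 1) i + fderiv ℝ u x (Pi.single i 1) j) / 2

open Function
open scoped NNReal

theorem ae_ae_update {n : ℕ} (i : Fin n) {P : (Fin n → ℝ) → Prop} (h : ∀ᵐ x, P x) :
    ∀ᵐ x, ∀ᵐ t, P (update x i t) := by
  obtain ⟨m, rfl⟩ := Nat.exists_eq_add_one_of_ne_zero (Fin.pos i).ne'
  let e := MeasurableEquiv.piFinSuccAbove (fun _ : Fin (m + 1) => ℝ) i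
  have he : MeasurePreserving e volume (volume.prod volume) := by
    simpa only [← Measure.volume_eq_prod] using volume_preserving_piFinSuccAbove (fun _ => ℝ) i
  have hslices : ∀ᵐ y : Fin m → ℝ, ∀ᵐ t : ℝ, P (i.insertNth t y) :=
    Measure.ae_ae_of_ae_prod
      ((he.symm.comp Measure.measurePreserving_swap).quasiMeasurePreserving.ae h)
  filter_upwards [(Measure.quasiMeasurePreserving_snd.comp he.quasiMeasurePreserving).ae hslices]
    with x hx
  simp_rw [← Fin.insertNth_removeNth]
  exact hx

theorem le_on_open_of_ae_le {X Y : Type*} [TopologicalSpace X] [MeasurableSpace X]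
    [TopologicalSpace Y] [LinearOrder Y] [OrderClosedTopology Y]
    {μ : Measure X} [μ.IsOpenPosMeasure] {U : Set X} {f g : X → Y}
    (hU : IsOpen U) (hf : ContinuousOn f U) (hg : ContinuousOn g U)
    (h : ∀ᵐ x ∂μ, x ∈ U → f x ≤ g x) : ∀ x ∈ U, f x ≤ g x := by
  have hopen : IsOpen (U ∩ (fun x => (g x, f x)) ⁻¹' {p | p.1 < p.2}) :=
    (hg.prodMk hf).isOpen_inter_preimage hU isOpen_lt_prod
  have hnull : μ (U ∩ (fun x => (g x, f x)) ⁻¹' {p | p.1 < p.2}) = 0 :=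
    measure_mono_null (by intro x hx hle; exact (hle hx.1).not_gt hx.2) (ae_iff.1 h)
  intro x hx
  by_contra hlt
  exact hopen.measure_ne_zero μ ⟨x, hx, not_le.1 hlt⟩ hnull

theorem Set.OrdConnected.lipschitzOnWith_of_ae_norm_hasDerivAt_le {E : Type*}
    [NormedAddCommGroup E] [NormedSpace ℝ E] [CompleteSpace E] {f f' : ℝ → E} {s : Set ℝ} {C : ℝ≥0}
    (hs : s.OrdConnected) (hf : ∀ t ∈ s, HasDerivAt f (f' t) t)
    (hC : ∀ᵐ t, t ∈ s → ‖f' t‖ ≤ C) : LipschitzOnWith C f s := by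
  have hC' : ∀ᵐ t, t ∈ s → ‖deriv f t‖ ≤ C := by
    filter_upwards [hC] with t h ht
    rw [(hf t ht).deriv]
    exact h ht
  refine LipschitzOnWith.of_dist_le_mul fun a ha b hb => ?_
  have hsub : uIcc b a ⊆ s := hs.uIcc_subset hb ha
  have hbound : ∀ᵐ t, t ∈ uIoc b a → ‖deriv f t‖ ≤ C := by
    filter_upwards [hC'] with t h ht using h (hsub (uIoc_subset_uIcc ht))
  have hint : IntervalIntegrable (deriv f) volume b a :=
    intervalIntegrable_iff.2 <| IntegrableOn.of_bound measure_Ioc_lt_top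
      (stronglyMeasurable_deriv f).aestronglyMeasurable C
      ((ae_restrict_iff' measurableSet_uIoc).2 hbound)
  rw [dist_eq_norm, ← intervalIntegral.integral_eq_sub_of_hasDerivAt
    (fun t ht => (hf t (hsub ht)).differentiableAt.hasDerivAt) hint, Real.dist_eq]
  exact intervalIntegral.norm_integral_le_of_norm_le_const_ae hbound

theorem abs_add_abs_le_of_ae_abs_add_mul_le {c a b : ℝ}
    (h : ∀ᵐ s, s ∈ Ioo (-1 : ℝ) 1 → |c + a * s| ≤ b) : |c| + |a| ≤ b := by
  have hIoo : ∀ s ∈ Ioo (-1 : ℝ) 1, |c + a * s| ≤ b :=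
    le_on_open_of_ae_le isOpen_Ioo (by fun_prop) continuousOn_const h
  have hIcc : Icc (-1 : ℝ) 1 ⊆ {s | |c + a * s| ≤ b} := by
    rw [← closure_Ioo (by norm_num : (-1 : ℝ) ≠ 1)]
    exact closure_minimal hIoo (isClosed_le (by fun_prop) continuous_const)
  obtain ⟨h₁, h₂⟩ := abs_le.1 (by simpa using hIcc (right_mem_Icc.2 (by norm_num)))
  obtain ⟨h₃, h₄⟩ := abs_le.1 (by simpa using hIcc (left_mem_Icc.2 (by norm_num)))
  cases abs_cases c <;> cases abs_cases a <;> linarith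

theorem DifferentiableAt.hasDerivAt_update_apply {ι κ : Type*} [Fintype ι] [DecidableEq ι]
    [Fintype κ] {u : (ι → ℝ) → κ → ℝ} {x : ι → ℝ}
    (hu : DifferentiableAt ℝ u x) (i : ι) (k : κ) :
    HasDerivAt (fun t => u (update x i t) k) (fderiv ℝ u x (Pi.single i 1) k) (x i) := by
  have hu' : HasFDerivAt u (fderiv ℝ u x) (update x i (x i)) := by
    rw [update_eq_self]
    exact hu.hasFDerivAt
  exact hasDerivAt_pi.1 (hu'.comp_hasDerivAt (x i) (hasDerivAt_update x i (x i))) k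

section Box

variable {n : ℕ} {I : Fin n → Set ℝ} {i : Fin n}

theorem lipschitzOnWith_update_of_ae_norm_le {E : Type*} [NormedAddCommGroup E]
    [NormedSpace ℝ E] [CompleteSpace E] {f f' : (Fin n → ℝ) → E} {C : ℝ≥0}
    (hI : ∀ j, IsOpen (I j)) (hIi : (I i).OrdConnected) (hf : ContinuousOn f (univ.pi I))
    (hf' : ∀ x ∈ univ.pi I, HasDerivAt (fun t => f (update x i t)) (f' x) (x i))
    (hC : ∀ᵐ x, x ∈ univ.pi I → ‖f' x‖ ≤ C) {x : Fin n → ℝ} (hx : x ∈ univ.pi I) :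
    LipschitzOnWith C (fun t => f (update x i t)) (I i) := by
  have hline : ∀ y ∈ univ.pi I, ∀ t ∈ I i, update y i t ∈ univ.pi I :=
    fun y hy t ht => (update_mem_pi_iff_of_mem hy).2 fun _ => ht
  have hgood : ∀ᵐ y, y ∈ univ.pi I → LipschitzOnWith C (fun t => f (update y i t)) (I i) := by
    filter_upwards [ae_ae_update i hC] with y hy hyI
    refine hIi.lipschitzOnWith_of_ae_norm_hasDerivAt_le (f' := fun t => f' (update y i t))
      (fun t ht => by simpa using hf' _ (hline y hyI t ht)) ?_
    filter_upwards [hy] with t h ht using h (hline y hyI t ht)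
  have hcont : ∀ r ∈ I i, ContinuousOn (fun y => f (update y i r)) (univ.pi I) := fun r hr =>
    hf.comp (continuous_id.update i continuous_const).continuousOn fun y hy => hline y hy r hr
  refine LipschitzOnWith.of_dist_le_mul fun s hs t ht => ?_
  refine le_on_open_of_ae_le (μ := volume) (isOpen_set_pi finite_univ fun j _ => hI j)
    (continuous_dist.comp_continuousOn ((hcont s hs).prodMk (hcont t ht))) continuousOn_const ?_
    x hx
  filter_upwards [hgood] with y hy hyI using (hy hyI).dist_le_mul s hs t ht

theorem update_eq_add_mul_of_ae_eq {f f' : (Fin n → ℝ) → ℝ} {c : ℝ}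
    (hI : ∀ j, IsOpen (I j)) (hIi : (I i).OrdConnected) (hf : ContinuousOn f (univ.pi I))
    (hf' : ∀ x ∈ univ.pi I, HasDerivAt (fun t => f (update x i t)) (f' x) (x i))
    (hc : ∀ᵐ x, x ∈ univ.pi I → f' x = c) {x : Fin n → ℝ} (hx : x ∈ univ.pi I)
    {t : ℝ} (ht : t ∈ I i) : f (update x i t) = f x + c * (t - x i) := by
  have hlip := lipschitzOnWith_update_of_ae_norm_le (f := fun y => f y - c * y i)
    (f' := fun y => f' y - c) (C := 0) hI hIi
    (hf.sub (by fun_prop : Continuous fun y : Fin n → ℝ => c * y i).continuousOn)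
    (fun y hy => by simpa using (hf' y hy).fun_sub ((hasDerivAt_id (y i)).const_mul c))
    (by filter_upwards [hc] with y h hy; simp [h hy]) hx
  have := hlip.dist_le_mul t ht (x i) (hx i trivial)
  simp only [update_self, update_eq_self, dist_sub_eq_dist_add_right, NNReal.coe_zero, zero_mul,
    dist_le_zero] at this
  linarith

theorem exists_ae_eq_const_of_ae_eq_of_update_eq {φ : ℝ → ℝ} {g : (Fin n → ℝ) → ℝ}
    (hg : ∀ x t, g (update x i t) = g x) (h : ∀ᵐ x, x ∈ univ.pi I → φ (x i) = g x) :
    ∃ d, ∀ᵐ x, x ∈ univ.pi I → φ (x i) = d ∧ g x = d := by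
  rcases eq_or_ne (volume (univ.pi I)) 0 with h0 | h0
  · exact ⟨0, (measure_eq_zero_iff_ae_notMem.1 h0).mono fun x hx hxI => absurd hxI hx⟩
  obtain ⟨x₀, hx₀, hslice⟩ :=
    Measure.exists_mem_of_measure_ne_zero_of_ae h0 (ae_restrict_of_ae (ae_ae_update i h))
  have hφ : ∀ᵐ t, t ∈ I i → φ t = g x₀ := by
    filter_upwards [hslice] with t ht hti
    simpa [hg] using ht ((update_mem_pi_iff_of_mem hx₀).2 fun _ => hti)
  refine ⟨g x₀, ?_⟩
  filter_upwards [Measure.tendsto_eval_ae_ae.eventually hφ, h] with x hxφ hx hxI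
  exact ⟨hxφ (hxI i trivial), (hx hxI).symm.trans (hxφ (hxI i trivial))⟩

end Box

theorem cube_eq_pi : cube = univ.pi fun _ : Fin 3 => Ioo (-1 : ℝ) 1 := by
  ext x
  simp [cube]

theorem update_mem_cube {x : Fin 3 → ℝ} (hx : x ∈ cube) (i : Fin 3) {t : ℝ}
    (ht : t ∈ Ioo (-1 : ℝ) 1) : update x i t ∈ cube := by
  rw [cube_eq_pi] at hx ⊢
  exact (update_mem_pi_iff_of_mem hx).2 fun _ => ht

theorem zero_mem_cube : (0 : Fin 3 → ℝ) ∈ cube := fun _ => by norm_num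

def twist (α : ℝ) (x : Fin 3 → ℝ) : Fin 3 → ℝ :=
  ![-(α * x 1 * x 2), α * x 0 * x 2, α * x 0 * x 1]

theorem differentiable_twist (α : ℝ) : Differentiable ℝ (twist α) := by
  rw [differentiable_pi]
  intro k
  fin_cases k <;>
    simp only [twist, Fin.isValue, Fin.zero_eta, Fin.mk_one, Fin.reduceFinMk, Matrix.cons_val_zero,
      Matrix.cons_val_one, Matrix.cons_val, differentiable_fun_neg_iff] <;>
    fun_prop

theorem strain_twist (α : ℝ) (x : Fin 3 → ℝ) (i j : Fin 3) :
    strain (twist α) i j x = !![0, 0, 0; 0, 0, α * x 0; 0, α * x 0, 0] i j := by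
  have h (i k : Fin 3) := ((differentiable_twist α x).hasDerivAt_update_apply i k).deriv.symm
  simp only [strain, h]
  fin_cases i <;> fin_cases j <;> simp [twist]

theorem strain_sub {u w : (Fin 3 → ℝ) → Fin 3 → ℝ} {x : Fin 3 → ℝ}
    (hu : DifferentiableAt ℝ u x) (hw : DifferentiableAt ℝ w x) (i j : Fin 3) :
    strain (u - w) i j x = strain u i j x - strain w i j x := by
  simp only [strain, fderiv_sub hu hw, sub_apply, Pi.sub_apply]
  ring

section ReducedDisplacement

variable {v : (Fin 3 → ℝ) → Fin 3 → ℝ}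

theorem apply_update_eq_of_ae_fderiv_eq (hdiff : ∀ x ∈ cube, DifferentiableAt ℝ v x)
    {i k : Fin 3} {c : ℝ} (h : ∀ᵐ x, x ∈ cube → fderiv ℝ v x (Pi.single i 1) k = c)
    {x : Fin 3 → ℝ} (hx : x ∈ cube) {t : ℝ} (ht : t ∈ Ioo (-1 : ℝ) 1) :
    v (update x i t) k = v x k + c * (t - x i) := by
  rw [cube_eq_pi] at hdiff h hx
  exact update_eq_add_mul_of_ae_eq (f := fun y => v y k) (fun _ => isOpen_Ioo) ordConnected_Ioo
    (fun y hy =>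
      ((continuous_apply k).continuousAt.comp (hdiff y hy).continuousAt).continuousWithinAt)
    (fun y hy => (hdiff y hy).hasDerivAt_update_apply i k) h hx ht

theorem apply_two_eq_zero (hcont : ContinuousOn v cubeCl)
    (hdiff : ∀ x ∈ cube, DifferentiableAt ℝ v x)
    (h22 : ∀ᵐ x, x ∈ cube → strain v 2 2 x = 0)
    (hbc : ∀ a ∈ Icc (-1 : ℝ) 1, ∀ b ∈ Icc (-1 : ℝ) 1, v ![a, b, 1] 2 = 0)
    {x : Fin 3 → ℝ} (hx : x ∈ cube) : v x 2 = 0 := by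
  have hconst : EqOn (fun t => v (update x 2 t) 2) (fun _ => v x 2) (Ioo (-1) 1) := fun t ht => by
    simpa using apply_update_eq_of_ae_fderiv_eq hdiff (c := 0)
      (by filter_upwards [h22] with y h hy; simpa [strain] using h hy) hx ht
  have hline : ContinuousOn (fun t => v (update x 2 t) 2) (Icc (-1) 1) := by
    refine (continuous_apply 2).comp_continuousOn (hcont.comp
      (Continuous.update continuous_const 2 continuous_id :
        Continuous fun t : ℝ => update x 2 t).continuousOn fun t ht k => ?_)
    rcases eq_or_ne k 2 with rfl | hk
    · simpa using ht
    · simpa [hk] using Ioo_subset_Icc_self (hx k)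
  have htop : v (update x 2 1) 2 = v x 2 :=
    hconst.of_subset_closure hline continuousOn_const Ioo_subset_Icc_self
      (by rw [closure_Ioo (by norm_num)]) (right_mem_Icc.2 (by norm_num))
  have hx₂ : update x 2 1 = ![x 0, x 1, 1] := by
    ext k
    fin_cases k <;> rfl
  rw [← htop, hx₂]
  exact hbc _ (Ioo_subset_Icc_self (hx 0)) _ (Ioo_subset_Icc_self (hx 1))

theorem fderiv_apply_two_eq_zero (hdiff : ∀ x ∈ cube, DifferentiableAt ℝ v x)
    (h2 : ∀ x ∈ cube, v x 2 = 0) {x : Fin 3 → ℝ} (hx : x ∈ cube) (i : Fin 3) :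
    fderiv ℝ v x (Pi.single i 1) 2 = 0 := by
  refine ((hdiff x hx).hasDerivAt_update_apply i 2).unique
    ((hasDerivAt_const (x i) (0 : ℝ)).congr_of_eventuallyEq ?_)
  filter_upwards [Ioo_mem_nhds (hx i).1 (hx i).2] with t ht using h2 _ (update_mem_cube hx i ht)

theorem apply_zero_eq (hdiff : ∀ x ∈ cube, DifferentiableAt ℝ v x)
    (h00 : ∀ᵐ x, x ∈ cube → strain v 0 0 x = 0) (h02 : ∀ᵐ x, x ∈ cube → strain v 0 2 x = 0)
    (h2 : ∀ x ∈ cube, v x 2 = 0) {x : Fin 3 → ℝ} (hx : x ∈ cube) :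
    v x 0 = v ![0, x 1, 0] 0 := by
  have hx₀₂ : update (update x 0 0) 2 0 = ![0, x 1, 0] := by
    ext k
    fin_cases k <;> rfl
  rw [← hx₀₂, apply_update_eq_of_ae_fderiv_eq hdiff (c := 0) ?_ (update_mem_cube hx 0 (by norm_num))
    (by norm_num), apply_update_eq_of_ae_fderiv_eq hdiff (c := 0) ?_ hx (by norm_num)]
  · ring
  · filter_upwards [h00] with y h hy
    simpa [strain] using h hy
  · filter_upwards [h02] with y h hy
    simpa [strain, fderiv_apply_two_eq_zero hdiff h2 hy] using h hy

theorem apply_one_eq (hdiff : ∀ x ∈ cube, DifferentiableAt ℝ v x)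
    (h11 : ∀ᵐ x, x ∈ cube → strain v 1 1 x = 0) {x : Fin 3 → ℝ} (hx : x ∈ cube) :
    v x 1 = v ![x 0, 0, x 2] 1 := by
  have hx₁ : update x 1 0 = ![x 0, 0, x 2] := by
    ext k
    fin_cases k <;> rfl
  rw [← hx₁, apply_update_eq_of_ae_fderiv_eq hdiff (c := 0) ?_ hx (by norm_num)]
  · ring
  · filter_upwards [h11] with y h hy
    simpa [strain] using h hy

theorem exists_ae_fderiv_eq_rotation (hdiff : ∀ x ∈ cube, DifferentiableAt ℝ v x)
    (h01 : ∀ᵐ x, x ∈ cube → strain v 0 1 x = 0)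
    (h0 : ∀ x ∈ cube, v x 0 = v ![0, x 1, 0] 0) (h1 : ∀ x ∈ cube, v x 1 = v ![x 0, 0, x 2] 1) :
    ∃ d : ℝ, ∀ᵐ x, x ∈ cube →
      fderiv ℝ v x (Pi.single 1 1) 0 = d ∧ fderiv ℝ v x (Pi.single 0 1) 1 = -d := by
  set F : ℝ → ℝ := fun t => v ![0, t, 0] 0
  set G : ℝ → ℝ → ℝ := fun a b => v ![a, 0, b] 1
  have hF : ∀ x ∈ cube, HasDerivAt F (fderiv ℝ v x (Pi.single 1 1) 0) (x 1) := fun x hx =>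
    ((hdiff x hx).hasDerivAt_update_apply 1 0).congr_of_eventuallyEq <| by
      filter_upwards [Ioo_mem_nhds (hx 1).1 (hx 1).2] with t ht
      simpa using (h0 _ (update_mem_cube hx 1 ht)).symm
  have hG : ∀ x ∈ cube, HasDerivAt (G · (x 2)) (fderiv ℝ v x (Pi.single 0 1) 1) (x 0) :=
    fun x hx => ((hdiff x hx).hasDerivAt_update_apply 0 1).congr_of_eventuallyEq <| by
      filter_upwards [Ioo_mem_nhds (hx 0).1 (hx 0).2] with t ht
      simpa using (h1 _ (update_mem_cube hx 0 ht)).symm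
  have hsplit : ∀ᵐ x, x ∈ cube → deriv F (x 1) = -deriv (G · (x 2)) (x 0) := by
    filter_upwards [h01] with x h hx
    rw [(hF x hx).deriv, (hG x hx).deriv]
    simp only [strain] at h
    linarith [h hx]
  obtain ⟨d, hd⟩ := exists_ae_eq_const_of_ae_eq_of_update_eq (by simp) (cube_eq_pi ▸ hsplit)
  rw [← cube_eq_pi] at hd
  refine ⟨d, ?_⟩
  filter_upwards [hd] with x h hx
  rw [← (hF x hx).deriv, ← (hG x hx).deriv]
  exact ⟨(h hx).1, by linarith [(h hx).2]⟩

theorem exists_apply_zero_eq_and_apply_one_eq (hdiff : ∀ x ∈ cube, DifferentiableAt ℝ v x)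
    (h01 : ∀ᵐ x, x ∈ cube → strain v 0 1 x = 0)
    (h0 : ∀ x ∈ cube, v x 0 = v ![0, x 1, 0] 0) (h1 : ∀ x ∈ cube, v x 1 = v ![x 0, 0, x 2] 1) :
    ∃ c d : ℝ, ∀ x ∈ cube, v x 0 = c + d * x 1 ∧ v x 1 = v ![0, 0, x 2] 1 - d * x 0 := by
  obtain ⟨d, hd⟩ := exists_ae_fderiv_eq_rotation hdiff h01 h0 h1
  refine ⟨v 0 0, d, fun x hx => ⟨?_, ?_⟩⟩
  · have h := apply_update_eq_of_ae_fderiv_eq hdiff (hd.mono fun _ h hy => (h hy).1)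
      zero_mem_cube (hx 1)
    have hx₁ : update (0 : Fin 3 → ℝ) 1 (x 1) = ![0, x 1, 0] := by
      ext k
      fin_cases k <;> rfl
    rw [h0 x hx, ← hx₁, h]
    simp
  · have h := apply_update_eq_of_ae_fderiv_eq hdiff (hd.mono fun _ h hy => (h hy).2) hx
      (t := 0) (by norm_num)
    have hx₀ : ![update x 0 0 0, 0, update x 0 0 2] = ![0, 0, x 2] := by
      simp
    rw [h1 _ (update_mem_cube hx 0 (by norm_num)), hx₀] at h
    linarith

theorem lipschitzOnWith_apply_one {α d : ℝ} (hdiff : ∀ x ∈ cube, DifferentiableAt ℝ v x)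
    (h12 : ∀ᵐ x, x ∈ cube → |strain v 1 2 x + α * x 0| ≤ 1) (h2 : ∀ x ∈ cube, v x 2 = 0)
    (h1 : ∀ x ∈ cube, v x 1 = v ![0, 0, x 2] 1 - d * x 0) :
    LipschitzOnWith (Real.toNNReal (2 * (1 - |α|))) (fun t => v ![0, 0, t] 1) (Ioo (-1) 1) := by
  set ψ : ℝ → ℝ := fun t => v ![0, 0, t] 1
  have hψ : ∀ x ∈ cube, HasDerivAt ψ (fderiv ℝ v x (Pi.single 2 1) 1) (x 2) := fun x hx =>
    (((hdiff x hx).hasDerivAt_update_apply 2 1).add_const (d * x 0)).congr_of_eventuallyEq <| by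
      filter_upwards [Ioo_mem_nhds (hx 2).1 (hx 2).2] with t ht
      have h := h1 _ (update_mem_cube hx 2 ht)
      simp only [update_self, ne_eq, Fin.reduceEq, not_false_eq_true, update_of_ne] at h
      simp only [ψ, h]
      ring
  have hslope : ∀ᵐ x, x ∈ cube → |deriv ψ (x 2) + 2 * α * x 0| ≤ 2 := by
    filter_upwards [h12] with x h hx
    specialize h hx
    rw [strain, fderiv_apply_two_eq_zero hdiff h2 hx, ← (hψ x hx).deriv] at h
    rw [show deriv ψ (x 2) + 2 * α * x 0 = 2 * ((deriv ψ (x 2) + 0) / 2 + α * x 0) by ring,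
      abs_mul, abs_two]
    linarith
  have hbound : ∀ᵐ x, x ∈ cube → |deriv ψ (x 2)| ≤ 2 * (1 - |α|) := by
    filter_upwards [ae_ae_update 0 hslope] with x hx hxc
    have h := abs_add_abs_le_of_ae_abs_add_mul_le (c := deriv ψ (x 2)) (a := 2 * α) (b := 2) <| by
      filter_upwards [hx] with s hs hsI
      simpa [mul_assoc] using hs (update_mem_cube hxc 0 hsI)
    rw [abs_mul, abs_two] at h
    linarith
  rw [cube_eq_pi] at hψ hbound
  simpa using lipschitzOnWith_update_of_ae_norm_le (f := fun x => ψ (x 2))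
    (f' := fun x => deriv ψ (x 2)) (i := 2) (fun _ => isOpen_Ioo) ordConnected_Ioo
    (fun x hx => (ContinuousAt.comp (g := ψ) (f := fun y : Fin 3 → ℝ => y 2)
      (hψ x hx).continuousAt (continuous_apply 2).continuousAt).continuousWithinAt)
    (fun x hx => by simpa using (hψ x hx).differentiableAt.hasDerivAt)
    (hbound.mono fun x h hx => (h hx).trans (Real.le_coe_toNNReal _))
    (cube_eq_pi ▸ zero_mem_cube)

end ReducedDisplacement

theorem stmt_5_general (α : ℝ)
    (u : (Fin 3 → ℝ) → (Fin 3 → ℝ))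
    (hcont : ContinuousOn u cubeCl)
    (hdiff : ∀ x ∈ cube, DifferentiableAt ℝ u x)
    (hstrain : ∀ᵐ x : Fin 3 → ℝ, x ∈ cube →
      strain u 0 0 x = 0 ∧ strain u 1 1 x = 0 ∧ strain u 2 2 x = 0 ∧
      strain u 0 1 x = 0 ∧ strain u 0 2 x = 0 ∧ |strain u 1 2 x| ≤ 1)
    (hbc : ∀ x₁ ∈ Icc (-1 : ℝ) 1, ∀ x₂ ∈ Icc (-1 : ℝ) 1,
      u ![x₁, x₂, 1] 2 = α * x₁ * x₂ ∧ u ![x₁, x₂, -1] 2 = α * x₁ * x₂) :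
    ∃ (c d : ℝ) (ψ : ℝ → ℝ),
      LipschitzOnWith (Real.toNNReal (2 * (1 - |α|))) ψ (Ioo (-1 : ℝ) 1) ∧
      ∀ x ∈ cube,
        u x = ![-(α * x 1 * x 2) + d * x 1 + c,
                α * x 0 * x 2 - d * x 0 + ψ (x 2),
                α * x 0 * x 1] := by
  set v := u - twist α with hv
  have hvdiff : ∀ x ∈ cube, DifferentiableAt ℝ v x := fun x hx =>
    (hdiff x hx).sub (differentiable_twist α x)
  have hvstrain : ∀ᵐ x, x ∈ cube → strain v 0 0 x = 0 ∧ strain v 1 1 x = 0 ∧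
      strain v 2 2 x = 0 ∧ strain v 0 1 x = 0 ∧ strain v 0 2 x = 0 ∧
      |strain v 1 2 x + α * x 0| ≤ 1 := by
    filter_upwards [hstrain] with x h hx
    simpa [hv, strain_sub (hdiff x hx) (differentiable_twist α x), strain_twist] using h hx
  have h2 : ∀ x ∈ cube, v x 2 = 0 := fun x hx =>
    apply_two_eq_zero (hcont.sub (differentiable_twist α).continuous.continuousOn) hvdiff
      (hvstrain.mono fun _ h hx => (h hx).2.2.1)
      (fun a ha b hb => by simp [twist, (hbc a ha b hb).1]) hx
  obtain ⟨c, d, h01⟩ := exists_apply_zero_eq_and_apply_one_eq hvdiff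
    (hvstrain.mono fun _ h hx => (h hx).2.2.2.1)
    (fun x hx => apply_zero_eq hvdiff (hvstrain.mono fun _ h hx => (h hx).1)
      (hvstrain.mono fun _ h hx => (h hx).2.2.2.2.1) h2 hx)
    (fun x hx => apply_one_eq hvdiff (hvstrain.mono fun _ h hx => (h hx).2.1) hx)
  refine ⟨c, d, fun t => v ![0, 0, t] 1, lipschitzOnWith_apply_one hvdiff
    (hvstrain.mono fun _ h hx => (h hx).2.2.2.2.2) h2 fun x hx => (h01 x hx).2, fun x hx => ?_⟩
  have hu : u x = v x + twist α x := by simp [hv]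
  ext k
  fin_cases k <;>
    simp only [hu, twist, Pi.add_apply, (h01 x hx).1, (h01 x hx).2, h2 x hx, Fin.isValue,
      Fin.zero_eta, Fin.mk_one, Fin.reduceFinMk, Matrix.cons_val_zero, Matrix.cons_val_one,
      Matrix.cons_val, zero_add] <;>
    ring

theorem stmt_5 (α : ℝ) (hα : α ∈ Icc (-1 : ℝ) 1)
    (u : (Fin 3 → ℝ) → (Fin 3 → ℝ))
    (hcont : ContinuousOn u cubeCl)
    (hdiff : ∀ x ∈ cube, DifferentiableAt ℝ u x)
    (hstrain : ∀ᵐ x : Fin 3 → ℝ, x ∈ cube →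
      strain u 0 0 x = 0 ∧ strain u 1 1 x = 0 ∧ strain u 2 2 x = 0 ∧
      strain u 0 1 x = 0 ∧ strain u 0 2 x = 0 ∧ |strain u 1 2 x| ≤ 1)
    (hbc : ∀ x₁ ∈ Icc (-1 : ℝ) 1, ∀ x₂ ∈ Icc (-1 : ℝ) 1,
      u ![x₁, x₂, 1] 2 = α * x₁ * x₂ ∧ u ![x₁, x₂, -1] 2 = α * x₁ * x₂) :
    ∃ (c d : ℝ) (ψ : ℝ → ℝ),
      LipschitzOnWith (Real.toNNReal (2 * (1 - |α|))) ψ (Ioo (-1 : ℝ) 1) ∧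
      ∀ x ∈ cube,
        u x = ![-(α * x 1 * x 2) + d * x 1 + c,
                α * x 0 * x 2 - d * x 0 + ψ (x 2),
                α * x 0 * x 1] :=
  stmt_5_general α u hcont hdiff hstrain hbc
end

section
/- There exists c > 0 such that for any f, g, h, k ∈ L²((−1,1)), setting δ := ∫_{(−1,1)²} |x f(y) + h(y) − y g(x) − k(x)|² dx dy, one can choose β, F, G ∈ ℝ such that ∫_{(−1,1)} |f(y) − βy − F|² dy + ∫_{(−1,1)} |g(x) − βx − G|² dx ≤ c δ. -/
/-!
Write `E(x, y) = x f(y) + h(y) - y g(x) - k(x)` and `δ = ∫∫ E²`. Since `∫ x = 0` and `∫ x² = 2/3`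
on `(-1, 1)`, pairing `E` with `x` in the first variable gives
`∫ x E(x, y) dx = (2/3) (f(y) - β y - F)` with `β = (3/2) ∫ x g(x) dx`, `F = (3/2) ∫ x k(x) dx`,
so Cauchy–Schwarz in `x` and Fubini give `∫ (f(y) - β y - F)² dy ≤ (3/2) δ`. As `E` only changes
sign under `(x, y, f, g, h, k) ↦ (y, x, g, f, k, h)`, `g` is likewise within `(3/2) δ` of an affine
function; and since `β` is exactly the least-squares slope of `g` on `(-1, 1)`, switching to slope
`β` only lowers that error. Hence `c = 3`.
-/

open MeasureTheory Set

theorem sq_integral_mul_le_integral_sq_mul_integral_sq {α : Type*} [MeasurableSpace α]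
    {μ : Measure α} {u v : α → ℝ} (hu : MemLp u 2 μ) (hv : MemLp v 2 μ) :
    (∫ a, u a * v a ∂μ) ^ 2 ≤ (∫ a, u a ^ 2 ∂μ) * ∫ a, v a ^ 2 ∂μ := by
  have inner_toLp : ∀ {w z : α → ℝ} (hw : MemLp w 2 μ) (hz : MemLp z 2 μ),
      inner ℝ (hw.toLp w) (hz.toLp z) = ∫ a, w a * z a ∂μ := by
    intro w z hw hz
    rw [L2.inner_def]
    refine integral_congr_ae ?_
    filter_upwards [hw.coeFn_toLp, hz.coeFn_toLp] with a hwa hza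
    simp [hwa, hza, mul_comm]
  have := real_inner_mul_inner_self_le (hu.toLp u) (hv.toLp v)
  simpa only [inner_toLp, ← sq] using this

theorem integral_sq_integral_mul_le {α β : Type*} [MeasurableSpace α] [MeasurableSpace β]
    {μ : Measure α} {ν : Measure β} [SFinite μ] [SFinite ν] {w : α → ℝ} {E : α × β → ℝ}
    (hw : MemLp w 2 μ) (hE : MemLp E 2 (μ.prod ν)) :
    ∫ y, (∫ x, w x * E (x, y) ∂μ) ^ 2 ∂ν ≤ (∫ x, w x ^ 2 ∂μ) * ∫ p, E p ^ 2 ∂μ.prod ν := by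
  have hE_sections : ∀ᵐ y ∂ν, MemLp (fun x => E (x, y)) 2 μ := by
    filter_upwards [hE.aestronglyMeasurable.prodMk_right, hE.integrable_sq.prod_left_ae]
      with y hmeas hint
    exact (memLp_two_iff_integrable_sq hmeas).2 hint
  calc ∫ y, (∫ x, w x * E (x, y) ∂μ) ^ 2 ∂ν
      ≤ ∫ y, (∫ x, w x ^ 2 ∂μ) * ∫ x, E (x, y) ^ 2 ∂μ ∂ν := by
        refine integral_mono_of_nonneg (.of_forall fun _ => sq_nonneg _)
          (hE.integrable_sq.integral_prod_right.const_mul _) ?_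
        filter_upwards [hE_sections] with y hy
        exact sq_integral_mul_le_integral_sq_mul_integral_sq hw hy
    _ = _ := by rw [integral_const_mul, integral_prod_symm _ hE.integrable_sq]

local notation "μI" => volume.restrict (Ioo (-1 : ℝ) 1)

theorem integral_Ioo_neg_one_one_id : ∫ x in Ioo (-1 : ℝ) 1, x = 0 := by
  rw [← integral_Ioc_eq_integral_Ioo, ← intervalIntegral.integral_of_le (by norm_num),
    integral_id]
  norm_num

theorem integral_Ioo_neg_one_one_sq : ∫ x in Ioo (-1 : ℝ) 1, x ^ 2 = 2 / 3 := by
  rw [← integral_Ioc_eq_integral_Ioo, ← intervalIntegral.integral_of_le (by norm_num),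
    integral_pow]
  norm_num

theorem memLp_id_Ioo_neg_one_one (p : ENNReal) : MemLp (fun x : ℝ => x) p μI := by
  refine MemLp.of_bound measurable_id.aestronglyMeasurable 1 ?_
  filter_upwards [ae_restrict_mem measurableSet_Ioo] with x hx
  exact abs_le.2 ⟨hx.1.le, hx.2.le⟩

theorem integrable_id_mul_of_memLp {u : ℝ → ℝ} (hu : MemLp u 2 μI) :
    Integrable (fun x => x * u x) μI :=
  (memLp_id_Ioo_neg_one_one 2).integrable_mul hu

def bilinearDefect (f g h k : ℝ → ℝ) (p : ℝ × ℝ) : ℝ :=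
  p.1 * f p.2 + h p.2 - p.2 * g p.1 - k p.1

theorem bilinearDefect_swap (f g h k : ℝ → ℝ) (p : ℝ × ℝ) :
    bilinearDefect g f k h p.swap = -bilinearDefect f g h k p := by
  simp only [bilinearDefect, Prod.fst_swap, Prod.snd_swap]
  ring

theorem integral_sq_bilinearDefect_swap (μ : Measure ℝ) [SFinite μ] (f g h k : ℝ → ℝ) :
    ∫ p, bilinearDefect g f k h p ^ 2 ∂μ.prod μ = ∫ p, bilinearDefect f g h k p ^ 2 ∂μ.prod μ := by
  rw [← integral_prod_swap]
  simp only [bilinearDefect_swap, neg_sq]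

theorem memLp_bilinearDefect {f g h k : ℝ → ℝ} (hf : MemLp f 2 μI) (hg : MemLp g 2 μI)
    (hh : MemLp h 2 μI) (hk : MemLp k 2 μI) :
    MemLp (bilinearDefect f g h k) 2 (Measure.prod μI μI) := by
  have hid := memLp_id_Ioo_neg_one_one ⊤
  exact ((((hf.comp_snd μI).mul (hid.comp_fst μI)).add (hh.comp_snd μI)).sub
    ((hg.comp_fst μI).mul (hid.comp_snd μI))).sub (hk.comp_fst μI)

theorem integral_mul_bilinearDefect {f g h k : ℝ → ℝ} (hg : MemLp g 2 μI) (hk : MemLp k 2 μI)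
    (y : ℝ) :
    ∫ x, x * bilinearDefect f g h k (x, y) ∂μI =
      2 / 3 * (f y - 3 / 2 * (∫ x, x * g x ∂μI) * y - 3 / 2 * ∫ x, x * k x ∂μI) := by
  have hid := memLp_id_Ioo_neg_one_one 2
  have expand : (fun x => x * bilinearDefect f g h k (x, y)) =
      fun x => x ^ 2 * f y + x * h y - y * (x * g x) - x * k x := by
    funext x; simp only [bilinearDefect]; ring
  have i₁ : Integrable (fun x : ℝ => x ^ 2 * f y) μI := hid.integrable_sq.mul_const _
  have i₂ : Integrable (fun x : ℝ => x * h y) μI := (hid.integrable one_le_two).mul_const _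
  have i₃ : Integrable (fun x => y * (x * g x)) μI := (integrable_id_mul_of_memLp hg).const_mul _
  rw [expand, integral_sub (by exact (i₁.add i₂).sub i₃) (integrable_id_mul_of_memLp hk),
    integral_sub (by exact i₁.add i₂) i₃, integral_add i₁ i₂, integral_mul_const,
    integral_mul_const, integral_const_mul, integral_Ioo_neg_one_one_sq,
    integral_Ioo_neg_one_one_id]
  ring

theorem integral_sq_sub_affine_le_bilinearDefect {f g h k : ℝ → ℝ} (hf : MemLp f 2 μI)
    (hg : MemLp g 2 μI) (hh : MemLp h 2 μI) (hk : MemLp k 2 μI) :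
    ∫ y, (f y - 3 / 2 * (∫ x, x * g x ∂μI) * y - 3 / 2 * ∫ x, x * k x ∂μI) ^ 2 ∂μI ≤
      3 / 2 * ∫ p, bilinearDefect f g h k p ^ 2 ∂Measure.prod μI μI := by
  have cauchy_schwarz := integral_sq_integral_mul_le (memLp_id_Ioo_neg_one_one 2)
    (memLp_bilinearDefect hf hg hh hk)
  simp only [integral_mul_bilinearDefect hg hk, mul_pow, integral_const_mul,
    integral_Ioo_neg_one_one_sq] at cauchy_schwarz
  linarith

theorem integral_sq_sub_leastSquares_le {u : ℝ → ℝ} (hu : MemLp u 2 μI) (a b : ℝ) :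
    ∫ x, (u x - 3 / 2 * (∫ t, t * u t ∂μI) * x - b) ^ 2 ∂μI ≤ ∫ x, (u x - a * x - b) ^ 2 ∂μI := by
  set β := 3 / 2 * ∫ t, t * u t ∂μI
  have hid := memLp_id_Ioo_neg_one_one 2
  have hr : MemLp (fun x => u x - β * x - b) 2 μI :=
    (hu.sub (hid.const_mul β)).sub (memLp_const b)
  have i₁ : Integrable (fun x : ℝ => β * x ^ 2) μI := hid.integrable_sq.const_mul _
  have i₂ : Integrable (fun x : ℝ => b * x) μI := (hid.integrable one_le_two).const_mul _
  have orthogonal : ∫ x, x * (u x - β * x - b) ∂μI = 0 := by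
    have expand : (fun x => x * (u x - β * x - b)) = fun x => x * u x - β * x ^ 2 - b * x := by
      funext x; ring
    rw [expand, integral_sub (by exact (integrable_id_mul_of_memLp hu).sub i₁) i₂,
      integral_sub (integrable_id_mul_of_memLp hu) i₁, integral_const_mul, integral_const_mul,
      integral_Ioo_neg_one_one_sq, integral_Ioo_neg_one_one_id]
    ring
  have expand : (fun x => (u x - a * x - b) ^ 2) = fun x =>
      (u x - β * x - b) ^ 2 + 2 * (β - a) * (x * (u x - β * x - b)) + (β - a) ^ 2 * x ^ 2 := by
    funext x; ring
  have i₃ : Integrable (fun x => 2 * (β - a) * (x * (u x - β * x - b))) μI :=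
    (integrable_id_mul_of_memLp hr).const_mul _
  rw [expand, integral_add (by exact hr.integrable_sq.add i₃) (hid.integrable_sq.const_mul _),
    integral_add hr.integrable_sq i₃, integral_const_mul, integral_const_mul, orthogonal,
    integral_Ioo_neg_one_one_sq]
  nlinarith [sq_nonneg (β - a)]

theorem stmt_7 :
    ∃ c : ℝ, 0 < c ∧
      ∀ f g h k : ℝ → ℝ,
        MemLp f 2 (volume.restrict (Ioo (-1 : ℝ) 1)) →
        MemLp g 2 (volume.restrict (Ioo (-1 : ℝ) 1)) →
        MemLp h 2 (volume.restrict (Ioo (-1 : ℝ) 1)) →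
        MemLp k 2 (volume.restrict (Ioo (-1 : ℝ) 1)) →
        ∃ β F G : ℝ,
          (∫ y in Ioo (-1 : ℝ) 1, (f y - β * y - F) ^ 2) +
          (∫ x in Ioo (-1 : ℝ) 1, (g x - β * x - G) ^ 2) ≤
          c * ∫ p in (Ioo (-1 : ℝ) 1) ×ˢ (Ioo (-1 : ℝ) 1),
                (p.1 * f p.2 + h p.2 - p.2 * g p.1 - k p.1) ^ 2 := by
  refine ⟨3, by norm_num, fun f g h k hf hg hh hk => ?_⟩
  refine ⟨3 / 2 * ∫ x, x * g x ∂μI, 3 / 2 * ∫ x, x * k x ∂μI, 3 / 2 * ∫ y, y * h y ∂μI, ?_⟩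
  have f_fit := integral_sq_sub_affine_le_bilinearDefect hf hg hh hk
  have g_fit := integral_sq_sub_affine_le_bilinearDefect hg hf hk hh
  have g_slope := integral_sq_sub_leastSquares_le hg (3 / 2 * ∫ y, y * f y ∂μI)
    (3 / 2 * ∫ y, y * h y ∂μI)
  rw [integral_sq_bilinearDefect_swap] at g_fit
  rw [Measure.volume_eq_prod, ← Measure.prod_restrict]
  change _ ≤ 3 * ∫ p, bilinearDefect f g h k p ^ 2 ∂Measure.prod μI μI
  linarith
end

section
/- Let β : (−1,1) → ℝ be given by β(x₃) = ∫_{−1}^{x₃} φ(t) dt − c*, where φ ∈ L²((−1,1)) satisfies |φ| ≥ 1 almost everywhere and changes sign at most N times, and c* is chosen so that ∫_{(−1,1)} β = 0. Then there is a universal constant c > 0 with ∫_{(−1,1)} β² dx₃ ≥ c/(N+1)². -/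
/-!
On each of the at most `N + 1` intervals of constant sign, `|β'| = |φ| ≥ 1` and the sign is
fixed, so `|β y - β x| ≥ |y - x|` there. Such a function cannot be small on a whole interval of
length `ℓ`: if `|β| < ℓ/4` somewhere in the first quarter, then `|β| ≥ ℓ/4` on the last quarter,
so `∫ β² ≥ ℓ³/64` over the interval. Summing over the intervals and using Jensen,
`∑ ℓᵢ³ ≥ (∑ ℓᵢ)³/(N+1)² = 8/(N+1)²`.
-/

open MeasureTheory Set intervalIntegral

def ExpandsOn (f : ℝ → ℝ) (s : Set ℝ) : Prop :=
  ∀ x ∈ s, ∀ y ∈ s, |x - y| ≤ |f x - f y|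

lemma ExpandsOn.of_le {f : ℝ → ℝ} {s : Set ℝ}
    (h : ∀ x ∈ s, ∀ y ∈ s, x ≤ y → y - x ≤ |f y - f x|) : ExpandsOn f s := by
  intro x hx y hy
  rcases le_total x y with hxy | hyx
  · rw [abs_sub_comm x, abs_of_nonneg (sub_nonneg.2 hxy), abs_sub_comm]
    exact h x hx y hy hxy
  · rw [abs_of_nonneg (sub_nonneg.2 hyx)]
    exact h y hy x hx hyx

lemma sub_le_intervalIntegral_of_one_le {φ : ℝ → ℝ} {x y : ℝ} (hxy : x ≤ y)
    (hφ : IntervalIntegrable φ volume x y) (h : ∀ᵐ s, s ∈ Ioo x y → 1 ≤ φ s) :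
    y - x ≤ ∫ s in x..y, φ s := by
  have h' : (fun _ ↦ (1 : ℝ)) ≤ᵐ[volume.restrict (Icc x y)] φ := by
    rw [← Measure.restrict_congr_set Ioo_ae_eq_Icc]
    exact (ae_restrict_iff' measurableSet_Ioo).2 h
  simpa using integral_mono_ae_restrict hxy intervalIntegrable_const hφ h'

lemma expandsOn_of_sub_eq_intervalIntegral {F φ : ℝ → ℝ} {p q : ℝ}
    (hF : ∀ x ∈ Ioo p q, ∀ y ∈ Ioo p q, F y - F x = ∫ s in x..y, φ s)
    (hφ : IntegrableOn φ (Ioo p q)) (habs : ∀ᵐ s, s ∈ Ioo p q → 1 ≤ |φ s|)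
    (hsign : (∀ᵐ s, s ∈ Ioo p q → 0 ≤ φ s) ∨ (∀ᵐ s, s ∈ Ioo p q → φ s ≤ 0)) :
    ExpandsOn F (Ioo p q) := by
  refine ExpandsOn.of_le fun x hx y hy hxy ↦ ?_
  have hsub : Ioo x y ⊆ Ioo p q := Ioo_subset_Ioo hx.1.le hy.2.le
  have hint : IntervalIntegrable φ volume x y :=
    (intervalIntegrable_iff_integrableOn_Ioc_of_le hxy).2
      (hφ.mono_set (Ioc_subset_Ioo_right hy.2 |>.trans (Ioo_subset_Ioo_left hx.1.le)))
  rw [hF x hx y hy]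
  rcases hsign with hpos | hneg
  · refine (sub_le_intervalIntegral_of_one_le hxy hint ?_).trans (le_abs_self _)
    filter_upwards [habs, hpos] with s h1 h2 hs
    simpa only [abs_of_nonneg (h2 (hsub hs))] using h1 (hsub hs)
  · refine (sub_le_intervalIntegral_of_one_le (φ := fun s ↦ -φ s) hxy hint.neg ?_).trans ?_
    · filter_upwards [habs, hneg] with s h1 h2 hs
      simpa only [abs_of_nonpos (h2 (hsub hs))] using h1 (hsub hs)
    · rw [intervalIntegral.integral_neg]
      exact neg_le_abs _

lemma mul_le_setIntegral_sq {f : ℝ → ℝ} {s : Set ℝ} {u v c : ℝ}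
    (hf : IntegrableOn (fun x ↦ f x ^ 2) s) (huv : u ≤ v) (hsub : Ioo u v ⊆ s) (hc : 0 ≤ c)
    (hfc : ∀ x ∈ Ioo u v, c ≤ |f x|) :
    c ^ 2 * (v - u) ≤ ∫ x in s, f x ^ 2 := by
  have hpiece : c ^ 2 * (v - u) ≤ ∫ x in Ioo u v, f x ^ 2 := by
    rw [← Real.volume_real_Ioo_of_le huv]
    refine setIntegral_ge_of_const_le_real measurableSet_Ioo measure_Ioo_lt_top.ne
      (fun x hx ↦ ?_) (hf.mono_set hsub)
    rw [← sq_abs (f x)]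
    exact pow_le_pow_left₀ hc (hfc x hx) 2
  exact hpiece.trans
    (setIntegral_mono_set hf (ae_of_all _ fun x ↦ sq_nonneg (f x)) hsub.eventuallyLE)

lemma cube_div_le_setIntegral_sq_of_expandsOn {f : ℝ → ℝ} {a b : ℝ} (hab : a ≤ b)
    (hf : IntegrableOn (fun x ↦ f x ^ 2) (Ioo a b)) (hexp : ExpandsOn f (Ioo a b)) :
    (b - a) ^ 3 / 64 ≤ ∫ x in Ioo a b, f x ^ 2 := by
  set ℓ := b - a
  have hℓ : 0 ≤ ℓ / 4 := by positivity
  have hcube : (b - a) ^ 3 / 64 = (ℓ / 4) ^ 2 * (ℓ / 4) := by ring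
  by_cases hsmall : ∃ x₀ ∈ Ioo a (a + ℓ / 4), |f x₀| < ℓ / 4
  · obtain ⟨x₀, hx₀, hfx₀⟩ := hsmall
    have hlarge : ∀ y ∈ Ioo (b - ℓ / 4) b, ℓ / 4 ≤ |f y| := by
      intro y hy
      have hdist := hexp y ⟨by linarith [hy.1, hx₀.1], hy.2⟩ x₀ ⟨hx₀.1, by linarith [hx₀.2]⟩
      rw [abs_of_pos (by linarith [hy.1, hx₀.2])] at hdist
      linarith [abs_sub (f y) (f x₀), hy.1, hx₀.2]
    rw [hcube]
    convert mul_le_setIntegral_sq hf (by linarith)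
      (Ioo_subset_Ioo_left (by linarith)) hℓ hlarge using 2
    ring
  · push Not at hsmall
    rw [hcube]
    convert mul_le_setIntegral_sq hf (by linarith)
      (Ioo_subset_Ioo_right (by linarith)) hℓ hsmall using 2
    ring

lemma MeasureTheory.IntegrableOn.integrableOn_sq_primitive_sub {φ : ℝ → ℝ} {a b : ℝ}
    (hφ : IntegrableOn φ (Ioo a b)) (hab : a ≤ b) (c : ℝ) :
    IntegrableOn (fun x ↦ ((∫ s in a..x, φ s) - c) ^ 2) (Ioo a b) := by
  have hprim := continuousOn_primitive_interval (μ := volume) (a := a) (b := b) (f := φ)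
    (by rwa [uIcc_of_le hab, integrableOn_Icc_iff_integrableOn_Ioo])
  rw [uIcc_of_le hab] at hprim
  exact ((hprim.sub continuousOn_const).pow 2).integrableOn_Icc.mono_set Ioo_subset_Icc_self

section Partition

variable {n : ℕ} {t : Fin (n + 2) → ℝ}

lemma Fin.sum_succ_sub_castSucc {M : Type*} [AddCommGroup M] (t : Fin (n + 2) → M) :
    ∑ i : Fin (n + 1), (t i.succ - t i.castSucc) = t (Fin.last (n + 1)) - t 0 := by
  rw [Finset.sum_sub_distrib, sub_eq_sub_iff_add_eq_add, add_comm, ← Fin.sum_univ_succ,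
    Fin.sum_univ_castSucc, add_comm]

lemma Monotone.pairwise_disjoint_on_Ioo_castSucc_succ (ht : Monotone t) :
    Pairwise (Function.onFun Disjoint fun i : Fin (n + 1) ↦ Ioo (t i.castSucc) (t i.succ)) :=
  (pairwise_disjoint_on _).2 fun _ _ hij ↦ disjoint_left.2 fun _ hx hy ↦
    (hx.2.trans_le (ht (Fin.succ_le_castSucc_iff.2 hij))).not_gt hy.1

lemma Monotone.Ioo_castSucc_succ_subset (ht : Monotone t) (i : Fin (n + 1)) :
    Ioo (t i.castSucc) (t i.succ) ⊆ Ioo (t 0) (t (Fin.last (n + 1))) :=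
  Ioo_subset_Ioo (ht (Fin.zero_le _)) (ht (Fin.le_last _))

lemma Monotone.sum_setIntegral_Ioo_le (ht : Monotone t) {g : ℝ → ℝ} (hg0 : ∀ x, 0 ≤ g x)
    (hg : IntegrableOn g (Ioo (t 0) (t (Fin.last (n + 1))))) :
    ∑ i : Fin (n + 1), ∫ x in Ioo (t i.castSucc) (t i.succ), g x
      ≤ ∫ x in Ioo (t 0) (t (Fin.last (n + 1))), g x := by
  rw [← integral_iUnion_fintype (fun _ ↦ measurableSet_Ioo)
    ht.pairwise_disjoint_on_Ioo_castSucc_succ fun i ↦ hg.mono_set (ht.Ioo_castSucc_succ_subset i)]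
  exact setIntegral_mono_set hg (ae_of_all _ hg0)
    (iUnion_subset ht.Ioo_castSucc_succ_subset).eventuallyLE

theorem Monotone.cube_div_le_setIntegral_sq (ht : Monotone t) {f : ℝ → ℝ}
    (hf : IntegrableOn (fun x ↦ f x ^ 2) (Ioo (t 0) (t (Fin.last (n + 1)))))
    (hexp : ∀ i : Fin (n + 1), ExpandsOn f (Ioo (t i.castSucc) (t i.succ))) :
    (t (Fin.last (n + 1)) - t 0) ^ 3 / (64 * ((n : ℝ) + 1) ^ 2)
      ≤ ∫ x in Ioo (t 0) (t (Fin.last (n + 1))), f x ^ 2 := by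
  have hlen : ∀ i : Fin (n + 1), 0 ≤ t i.succ - t i.castSucc :=
    fun i ↦ sub_nonneg.2 (ht (Fin.castSucc_le_succ i))
  have hjensen := pow_sum_div_card_le_sum_pow (s := Finset.univ) (fun i _ ↦ hlen i) 2
  rw [Finset.card_univ, Fintype.card_fin, Fin.sum_succ_sub_castSucc] at hjensen
  calc (t (Fin.last (n + 1)) - t 0) ^ 3 / (64 * ((n : ℝ) + 1) ^ 2)
      = (t (Fin.last (n + 1)) - t 0) ^ 3 / ((n + 1 : ℕ) : ℝ) ^ 2 / 64 := by
        push_cast; rw [div_div, mul_comm]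
    _ ≤ ∑ i : Fin (n + 1), (t i.succ - t i.castSucc) ^ 3 / 64 := by
      rw [← Finset.sum_div]; gcongr
    _ ≤ ∑ i : Fin (n + 1), ∫ x in Ioo (t i.castSucc) (t i.succ), f x ^ 2 :=
      Finset.sum_le_sum fun i _ ↦ cube_div_le_setIntegral_sq_of_expandsOn
        (ht (Fin.castSucc_le_succ i)) (hf.mono_set (ht.Ioo_castSucc_succ_subset i)) (hexp i)
    _ ≤ _ := ht.sum_setIntegral_Ioo_le (fun x ↦ sq_nonneg (f x)) hf

end Partition

theorem stmt_13 :
    ∃ c : ℝ, 0 < c ∧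
      ∀ (N : ℕ) (φ : ℝ → ℝ) (cstar : ℝ) (β : ℝ → ℝ),
        MemLp φ 2 (volume.restrict (Ioo (-1 : ℝ) 1)) →
        (∀ᵐ x : ℝ, x ∈ Ioo (-1 : ℝ) 1 → 1 ≤ |φ x|) →
        -- φ changes sign at most N times
        (∃ t : Fin (N + 2) → ℝ, Monotone t ∧ t 0 = -1 ∧ t (Fin.last (N + 1)) = 1 ∧
          ∀ i : Fin (N + 1),
            (∀ᵐ x : ℝ, x ∈ Ioo (t i.castSucc) (t i.succ) → 0 ≤ φ x) ∨
            (∀ᵐ x : ℝ, x ∈ Ioo (t i.castSucc) (t i.succ) → φ x ≤ 0)) →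
        (∀ x : ℝ, β x = (∫ s in (-1 : ℝ)..x, φ s) - cstar) →
        (∫ x in Ioo (-1 : ℝ) 1, β x) = 0 →
        (∫ x in Ioo (-1 : ℝ) 1, (β x) ^ 2) ≥ c / ((N : ℝ) + 1) ^ 2 := by
  refine ⟨1 / 8, by norm_num, ?_⟩
  rintro N φ cstar β hφ2 hφ1 ⟨t, ht, ht0, htl, hsign⟩ hβ -
  have hφ : IntegrableOn φ (Ioo (-1) 1) := hφ2.integrable one_le_two
  have hβ2 : IntegrableOn (fun x ↦ β x ^ 2) (Ioo (-1) 1) := by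
    simpa only [hβ] using hφ.integrableOn_sq_primitive_sub (by norm_num) cstar
  have hβφ : ∀ x ∈ Ioo (-1 : ℝ) 1, ∀ y ∈ Ioo (-1 : ℝ) 1, β y - β x = ∫ s in x..y, φ s := by
    have hint : ∀ y ∈ Ioo (-1 : ℝ) 1, IntervalIntegrable φ volume (-1) y := fun y hy ↦
      (intervalIntegrable_iff_integrableOn_Ioc_of_le hy.1.le).2
        (hφ.mono_set (Ioc_subset_Ioo_right hy.2))
    intro x hx y hy
    rw [hβ, hβ, sub_sub_sub_cancel_right, integral_interval_sub_left (hint y hy) (hint x hx)]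
  have hsub : ∀ i : Fin (N + 1), Ioo (t i.castSucc) (t i.succ) ⊆ Ioo (-1) 1 := by
    simpa only [ht0, htl] using ht.Ioo_castSucc_succ_subset
  have hexp : ∀ i : Fin (N + 1), ExpandsOn β (Ioo (t i.castSucc) (t i.succ)) := fun i ↦
    expandsOn_of_sub_eq_intervalIntegral (fun x hx y hy ↦ hβφ x (hsub i hx) y (hsub i hy))
      (hφ.mono_set (hsub i)) (by filter_upwards [hφ1] with s h hs using h (hsub i hs)) (hsign i)
  have key := ht.cube_div_le_setIntegral_sq (f := β) (by rwa [ht0, htl]) hexp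
  rw [ht0, htl] at key
  convert key using 1
  field_simp
  norm_num
end
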